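/- Let R > 0, H, K ∈ ℝ and a ∈ (0,R). Define U on the closed disk r ≤ R by U(x,y) = (KR/(2a²))·(r² − a²) + KR·ln(a/R) + H for 0 ≤ r ≤ a, and U(x,y) = KR·ln(r/R) + H for a ≤ r ≤ R. Then U is continuously differentiable on the open disk r < R, satisfies the wave equation ∂²U/∂x² − ∂²U/∂y² = 0 in r < a and the Laplace equation ∂²U/∂x² + ∂²U/∂y² = 0 in a < r < R, and on the boundary circle r = R it satisfies U = H and ∂U/∂r = K. Hence the model Cauchy problem for equation (2) has, for every a ∈ (0,R), a solution of this form that changes the type of the equation. -/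

import Mathlib

/-!
Write `s = x² + y²`. Then `U = φ(s)`, where the profile `φ` is affine for `s ≤ a²` and equals
`(KR/2) log s + const` beyond; the constants make the values and the slopes `KR/(2a²)` of the two
pieces agree at `s = a²`, so `φ`, hence `U`, is `C¹`. For a radial function `f(x² + y²)` one has
`U_xx = 2f' + 4x² f''` and `U_yy = 2f' + 4y² f''`, so `U_xx - U_yy = 4(x² - y²) f''` vanishes
where `f` is affine and `U_xx + U_yy = 4(f' + s f'')` vanishes for `f = c log s`. On the boundary
circle, `t ↦ U(t p / R) = φ(t²)` has derivative `2R φ'(R²) = K` at `t = R`.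
-/

/-- Second partial derivative of `U` in the first (x) variable. -/
noncomputable def pxx (U : ℝ × ℝ → ℝ) (p : ℝ × ℝ) : ℝ :=
  deriv (deriv (fun x => U (x, p.2))) p.1

/-- Second partial derivative of `U` in the second (y) variable. -/
noncomputable def pyy (U : ℝ × ℝ → ℝ) (p : ℝ × ℝ) : ℝ :=
  deriv (deriv (fun y => U (p.1, y))) p.2

theorem hasDerivAt_if_le {f g f' g' : ℝ → ℝ} {c : ℝ}
    (hf : ∀ s ≤ c, HasDerivAt f (f' s) s) (hg : ∀ s ≥ c, HasDerivAt g (g' s) s)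
    (hfg : f c = g c) (hfg' : f' c = g' c) (s : ℝ) :
    HasDerivAt (fun t => if t ≤ c then f t else g t) (if s ≤ c then f' s else g' s) s := by
  rcases lt_trichotomy s c with hs | rfl | hs
  · rw [if_pos hs.le]
    refine (hf s hs.le).congr_of_eventuallyEq ?_
    filter_upwards [eventually_lt_nhds hs] with t ht
    rw [if_pos ht.le]
  · rw [if_pos le_rfl]
    have hIic : HasDerivWithinAt (fun t => if t ≤ s then f t else g t) (f' s) (Set.Iic s) s :=
      (hf s le_rfl).hasDerivWithinAt.congr (fun t ht => if_pos ht) (if_pos le_rfl)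
    have hIci : HasDerivWithinAt (fun t => if t ≤ s then f t else g t) (f' s) (Set.Ici s) s := by
      refine (hfg' ▸ hg s le_rfl).hasDerivWithinAt.congr (fun t ht => ?_) (by simp [hfg])
      rcases (Set.mem_Ici.mp ht).eq_or_lt with rfl | h
      · simp [hfg]
      · exact if_neg h.not_ge
    simpa using (hIic.union hIci).hasDerivAt (by simp)
  · rw [if_neg hs.not_ge]
    refine (hg s hs.le).congr_of_eventuallyEq ?_
    filter_upwards [eventually_gt_nhds hs] with t ht
    rw [if_neg ht.not_ge]

theorem deriv_deriv_comp_sq_add {f f' : ℝ → ℝ} {f'' b x : ℝ}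
    (hf : ∀ t, HasDerivAt f (f' t) t) (hf' : HasDerivAt f' f'' (x ^ 2 + b)) :
    deriv (deriv fun t => f (t ^ 2 + b)) x = 2 * f' (x ^ 2 + b) + 4 * x ^ 2 * f'' := by
  have hsq (t : ℝ) : HasDerivAt (fun t => t ^ 2 + b) (2 * t) t := by
    simpa using (hasDerivAt_pow 2 t).add_const b
  have hfirst : deriv (fun t => f (t ^ 2 + b)) = fun t => f' (t ^ 2 + b) * (2 * t) :=
    funext fun t => ((hf _).comp t (hsq t)).deriv
  have hsecond : HasDerivAt (fun t => f' (t ^ 2 + b) * (2 * t))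
      (f'' * (2 * x) * (2 * x) + f' (x ^ 2 + b) * 2) x := by
    simpa using (hf'.comp x (hsq x)).fun_mul ((hasDerivAt_id' x).const_mul 2)
  rw [hfirst, hsecond.deriv]
  ring

section RadialFunction

variable {f f' : ℝ → ℝ} {f'' : ℝ} {p : ℝ × ℝ}

theorem pxx_comp_sq_add_sq (hf : ∀ t, HasDerivAt f (f' t) t)
    (hf' : HasDerivAt f' f'' (p.1 ^ 2 + p.2 ^ 2)) :
    pxx (fun q => f (q.1 ^ 2 + q.2 ^ 2)) p = 2 * f' (p.1 ^ 2 + p.2 ^ 2) + 4 * p.1 ^ 2 * f'' :=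
  deriv_deriv_comp_sq_add hf hf'

theorem pyy_comp_sq_add_sq (hf : ∀ t, HasDerivAt f (f' t) t)
    (hf' : HasDerivAt f' f'' (p.1 ^ 2 + p.2 ^ 2)) :
    pyy (fun q => f (q.1 ^ 2 + q.2 ^ 2)) p = 2 * f' (p.1 ^ 2 + p.2 ^ 2) + 4 * p.2 ^ 2 * f'' := by
  rw [add_comm (p.1 ^ 2)] at hf' ⊢
  simp only [pyy, add_comm (p.1 ^ 2)]
  exact deriv_deriv_comp_sq_add hf hf'

theorem pxx_sub_pyy_comp_sq_add_sq (hf : ∀ t, HasDerivAt f (f' t) t)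
    (hf' : HasDerivAt f' f'' (p.1 ^ 2 + p.2 ^ 2)) :
    pxx (fun q => f (q.1 ^ 2 + q.2 ^ 2)) p - pyy (fun q => f (q.1 ^ 2 + q.2 ^ 2)) p
      = 4 * (p.1 ^ 2 - p.2 ^ 2) * f'' := by
  rw [pxx_comp_sq_add_sq hf hf', pyy_comp_sq_add_sq hf hf']
  ring

theorem pxx_add_pyy_comp_sq_add_sq (hf : ∀ t, HasDerivAt f (f' t) t)
    (hf' : HasDerivAt f' f'' (p.1 ^ 2 + p.2 ^ 2)) :
    pxx (fun q => f (q.1 ^ 2 + q.2 ^ 2)) p + pyy (fun q => f (q.1 ^ 2 + q.2 ^ 2)) p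
      = 4 * (f' (p.1 ^ 2 + p.2 ^ 2) + (p.1 ^ 2 + p.2 ^ 2) * f'') := by
  rw [pxx_comp_sq_add_sq hf hf', pyy_comp_sq_add_sq hf hf']
  ring

end RadialFunction

noncomputable def radialProfile (R H K a s : ℝ) : ℝ :=
  if s ≤ a ^ 2 then K * R / (2 * a ^ 2) * (s - a ^ 2) + K * R * Real.log (a / R) + H
  else K * R * Real.log (Real.sqrt s / R) + H

noncomputable def radialProfileDeriv (R K a s : ℝ) : ℝ :=
  if s ≤ a ^ 2 then K * R / (2 * a ^ 2) else K * R / (2 * s)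

section RadialProfile

variable {R H K a s : ℝ}

theorem hasDerivAt_log_sqrt_div (hR : R ≠ 0) (hs : 0 < s) :
    HasDerivAt (fun t => Real.log (Real.sqrt t / R)) (1 / (2 * s)) s := by
  have hsqrt : Real.sqrt s ≠ 0 := (Real.sqrt_pos.mpr hs).ne'
  convert ((Real.hasDerivAt_sqrt hs.ne').div_const R).log (div_ne_zero hsqrt hR) using 1
  field_simp
  rw [Real.sq_sqrt hs.le]

theorem hasDerivAt_radialProfile (ha : a ≠ 0) (hR : R ≠ 0) (s : ℝ) :
    HasDerivAt (radialProfile R H K a) (radialProfileDeriv R K a s) s := by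
  have ha2 : 0 < a ^ 2 := by positivity
  refine hasDerivAt_if_le (f' := fun _ => K * R / (2 * a ^ 2)) (g' := fun t => K * R / (2 * t))
    (fun s _ => ?_) (fun s hs => ?_) ?_ rfl s
  · simpa using (((hasDerivAt_id s).sub_const (a ^ 2)).const_mul (K * R / (2 * a ^ 2))).add_const
      (K * R * Real.log (a / R) + H)
  · simpa [div_eq_mul_inv] using
      ((hasDerivAt_log_sqrt_div hR (ha2.trans_le hs)).const_mul (K * R)).add_const H
  · rw [Real.sqrt_sq_eq_abs, ← Real.log_abs (|a| / R), abs_div, abs_abs, ← abs_div,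
      Real.log_abs]
    ring

theorem continuous_radialProfileDeriv (ha : a ≠ 0) : Continuous (radialProfileDeriv R K a) := by
  have ha2 : 0 < a ^ 2 := by positivity
  refine continuous_if_le continuous_id continuous_const continuousOn_const ?_
    fun s hs => by rw [hs]
  exact continuousOn_const.div (continuousOn_const.mul continuousOn_id) fun s hs =>
    mul_ne_zero two_ne_zero (ha2.trans_le hs).ne'

theorem contDiff_radialProfile (ha : a ≠ 0) (hR : R ≠ 0) :
    ContDiff ℝ 1 (radialProfile R H K a) := by
  have hderiv := hasDerivAt_radialProfile (H := H) (K := K) ha hR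
  rw [contDiff_one_iff_deriv, funext fun s => (hderiv s).deriv]
  exact ⟨fun s => (hderiv s).differentiableAt, continuous_radialProfileDeriv ha⟩

theorem hasDerivAt_radialProfileDeriv_of_lt (hs : s < a ^ 2) :
    HasDerivAt (radialProfileDeriv R K a) 0 s := by
  refine (hasDerivAt_const s (K * R / (2 * a ^ 2))).congr_of_eventuallyEq ?_
  filter_upwards [eventually_lt_nhds hs] with t ht
  rw [radialProfileDeriv, if_pos ht.le]

theorem hasDerivAt_radialProfileDeriv_of_gt (hs : a ^ 2 < s) :
    HasDerivAt (radialProfileDeriv R K a) (-(K * R / (2 * s ^ 2))) s := by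
  have hs0 : s ≠ 0 := ((sq_nonneg a).trans_lt hs).ne'
  have h : HasDerivAt (fun t => K * R / 2 * t⁻¹) (K * R / 2 * -(s ^ 2)⁻¹) s :=
    (hasDerivAt_inv hs0).const_mul _
  refine (h.congr_deriv (by ring)).congr_of_eventuallyEq ?_
  filter_upwards [eventually_gt_nhds hs] with t ht
  rw [radialProfileDeriv, if_neg ht.not_ge]
  ring

theorem radialProfile_sq_self (hR : 0 < R) (haR : a ^ 2 < R ^ 2) :
    radialProfile R H K a (R ^ 2) = H := by
  rw [radialProfile, if_neg haR.not_ge, Real.sqrt_sq hR.le, div_self hR.ne', Real.log_one]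
  ring

theorem hasDerivAt_radialProfile_comp_sq (ha : a ≠ 0) (hR : 0 < R) (haR : a ^ 2 < R ^ 2) :
    HasDerivAt (fun t => radialProfile R H K a (t ^ 2)) K R := by
  have h := (hasDerivAt_radialProfile (H := H) (K := K) ha hR.ne' (R ^ 2)).comp R
    (hasDerivAt_pow 2 R)
  rw [radialProfileDeriv, if_neg haR.not_ge] at h
  refine h.congr_deriv ?_
  norm_num
  field_simp

end RadialProfile

theorem model_cauchy_eq2_type_changing_general
    (R H K a : ℝ) (ha : a ∈ Set.Ioo 0 R)
    (U : ℝ × ℝ → ℝ)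
    (hU : ∀ p : ℝ × ℝ, U p =
      if p.1 ^ 2 + p.2 ^ 2 ≤ a ^ 2 then
        K * R / (2 * a ^ 2) * (p.1 ^ 2 + p.2 ^ 2 - a ^ 2)
          + K * R * Real.log (a / R) + H
      else
        K * R * Real.log (Real.sqrt (p.1 ^ 2 + p.2 ^ 2) / R) + H) :
    ContDiffOn ℝ 1 U {p : ℝ × ℝ | p.1 ^ 2 + p.2 ^ 2 < R ^ 2} ∧
    (∀ p : ℝ × ℝ, p.1 ^ 2 + p.2 ^ 2 < a ^ 2 → pxx U p - pyy U p = 0) ∧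
    (∀ p : ℝ × ℝ, a ^ 2 < p.1 ^ 2 + p.2 ^ 2 → p.1 ^ 2 + p.2 ^ 2 < R ^ 2 →
      pxx U p + pyy U p = 0) ∧
    (∀ p : ℝ × ℝ, p.1 ^ 2 + p.2 ^ 2 = R ^ 2 →
      U p = H ∧
      deriv (fun t : ℝ => U (t / R * p.1, t / R * p.2)) R = K) := by
  obtain ⟨ha0, haR⟩ := ha
  have hR : 0 < R := ha0.trans haR
  have haR2 : a ^ 2 < R ^ 2 := by gcongr
  obtain rfl : U = fun p => radialProfile R H K a (p.1 ^ 2 + p.2 ^ 2) := funext hU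
  have hprofile := hasDerivAt_radialProfile (H := H) (K := K) ha0.ne' hR.ne'
  refine ⟨((contDiff_radialProfile ha0.ne' hR.ne').comp (by fun_prop)).contDiffOn,
    fun p hp => ?_, fun p hp _ => ?_, fun p hp => ⟨?_, ?_⟩⟩
  · rw [pxx_sub_pyy_comp_sq_add_sq hprofile (hasDerivAt_radialProfileDeriv_of_lt hp), mul_zero]
  · have hs : p.1 ^ 2 + p.2 ^ 2 ≠ 0 := ((sq_nonneg a).trans_lt hp).ne'
    rw [pxx_add_pyy_comp_sq_add_sq hprofile (hasDerivAt_radialProfileDeriv_of_gt hp),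
      radialProfileDeriv, if_neg hp.not_ge]
    field_simp
    ring
  · simpa only [hp] using radialProfile_sq_self (H := H) (K := K) hR haR2
  · have hradial : (fun t : ℝ => radialProfile R H K a ((t / R * p.1) ^ 2 + (t / R * p.2) ^ 2))
        = fun t => radialProfile R H K a (t ^ 2) := by
      funext t
      congr 1
      field_simp
      linear_combination t ^ 2 * hp
    rw [hradial, (hasDerivAt_radialProfile_comp_sq ha0.ne' hR haR2).deriv]

/-- For every `a ∈ (0,R)`, the piecewise function
`U = (KR/(2a²))(r² - a²) + KR ln(a/R) + H` for `r ≤ a`,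
`U = KR ln(r/R) + H` for `a ≤ r ≤ R` is a type-changing solution of the model
Cauchy problem for equation (2): it is C¹ in the open disk `r < R`, satisfies
the wave equation in `r < a` and the Laplace equation in `a < r < R`, and on
the boundary circle `r = R` satisfies `U = H` and `∂U/∂r = K`.  (The radial
derivative at a boundary point `p` is the derivative of `t ↦ U(t·p/R)` at
`t = R`.) -/
theorem model_cauchy_eq2_type_changing
    (R H K a : ℝ) (hR : 0 < R) (ha : a ∈ Set.Ioo 0 R)
    (U : ℝ × ℝ → ℝ)
    (hU : ∀ p : ℝ × ℝ, U p =
      if p.1 ^ 2 + p.2 ^ 2 ≤ a ^ 2 then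
        K * R / (2 * a ^ 2) * (p.1 ^ 2 + p.2 ^ 2 - a ^ 2)
          + K * R * Real.log (a / R) + H
      else
        K * R * Real.log (Real.sqrt (p.1 ^ 2 + p.2 ^ 2) / R) + H) :
    ContDiffOn ℝ 1 U {p : ℝ × ℝ | p.1 ^ 2 + p.2 ^ 2 < R ^ 2} ∧
    (∀ p : ℝ × ℝ, p.1 ^ 2 + p.2 ^ 2 < a ^ 2 → pxx U p - pyy U p = 0) ∧
    (∀ p : ℝ × ℝ, a ^ 2 < p.1 ^ 2 + p.2 ^ 2 → p.1 ^ 2 + p.2 ^ 2 < R ^ 2 →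
      pxx U p + pyy U p = 0) ∧
    (∀ p : ℝ × ℝ, p.1 ^ 2 + p.2 ^ 2 = R ^ 2 →
      U p = H ∧
      deriv (fun t : ℝ => U (t / R * p.1, t / R * p.2)) R = K) :=
  model_cauchy_eq2_type_changing_general R H K a ha U hU
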